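/- Let v be an additive valuation with item values in {a, b}, a > b ≥ 0. Let an allocation give agent i exactly r_i − 1 items of value a plus some set of low-value items of total value at most a, and give agent j exactly r_i items with at most r_i − 1 + 1 high-value items. If v(X_i) ≥ (r_i − 1)·a and the total low-value content of X_i is at most a, then μ(X_i ∪ X_j) ≤ (r_i − 1)·a + (|X_i| − r_i + 1)·b = v(X_i), where μ is the 2-part maximin share under v. -/
import Mathlib


open Finset

/-- Additive valuation induced by real item values. -/
def addVal {α : Type*} (w : α → ℝ) (S : Finset α) : ℝ := ∑ g ∈ S, w g

/-- Two-part maximin share: max over partitions (A, S \ A) of S of the min value. -/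
noncomputable def mu {α : Type*} [DecidableEq α] (v : Finset α → ℝ) (S : Finset α) : ℝ :=
  S.powerset.sup' ⟨∅, Finset.empty_mem_powerset S⟩ fun A => min (v A) (v (S \ A))

lemma arith18 (a b : ℝ) (hb : 0 ≤ b) (hab : b < a) (r k hA hB lA lB li : ℕ)
    (hh : hA + hB + 1 = r + k) (hl : lA + lB + k = li + r)
    (hk : k ≤ r) :
    min ((hA:ℝ)*a + lA*b) ((hB:ℝ)*a + lB*b) ≤ ((r:ℝ)-1)*a + li*b := by
  have ha0 : (0:ℝ) ≤ a := le_of_lt (lt_of_le_of_lt hb hab)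
  by_contra hcon
  push_neg at hcon
  rw [lt_min_iff] at hcon
  obtain ⟨h1, h2⟩ := hcon
  rcases le_or_gt r hA with hge | hlt
  · -- hA ≥ r: then hB + 1 ≤ k
    have hB1 : hB + 1 ≤ k := by omega
    have hB1' : (hB:ℝ) ≤ (k:ℝ) - 1 := by
      have : ((hB:ℝ) + 1) ≤ (k:ℝ) := by exact_mod_cast hB1
      linarith
    have hlB : (lB:ℝ) ≤ (li:ℝ) + r - k := by
      have h' : lB + k ≤ li + r := by omega
      have : ((lB:ℝ) + k) ≤ (li:ℝ) + r := by exact_mod_cast h'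
      linarith
    have hrk : (0:ℝ) ≤ (r:ℝ) - k := by
      have : (k:ℝ) ≤ r := by exact_mod_cast hk
      linarith
    nlinarith [mul_le_mul_of_nonneg_right hB1' ha0, mul_le_mul_of_nonneg_right hlB hb,
      mul_nonneg hrk (by linarith : (0:ℝ) ≤ a - b)]
  · -- hA ≤ r - 1
    have hAr : (hA:ℝ) ≤ (r:ℝ) - 1 := by
      have : (hA:ℝ) + 1 ≤ (r:ℝ) := by exact_mod_cast hlt
      linarith
    have hkey : r + li ≤ hA + lA := by
      by_contra hc
      push_neg at hc
      have hlA : (lA:ℝ) ≤ (r:ℝ) + li - hA - 1 := by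
        have h' : hA + lA + 1 ≤ r + li := by omega
        have : ((hA:ℝ) + lA + 1) ≤ (r:ℝ) + li := by exact_mod_cast h'
        linarith
      nlinarith [mul_le_mul_of_nonneg_right hlA hb,
        mul_nonneg (by linarith : (0:ℝ) ≤ (r:ℝ) - 1 - hA) (by linarith : (0:ℝ) ≤ a - b)]
    have hlBk : lB + k ≤ hA := by omega
    have hlB' : (lB:ℝ) ≤ (hA:ℝ) - k := by
      have : ((lB:ℝ) + k) ≤ (hA:ℝ) := by exact_mod_cast hlBk
      linarith
    have hBeq : (hB:ℝ) = (r:ℝ) + k - 1 - hA := by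
      have : ((hA:ℝ) + hB + 1) = (r:ℝ) + k := by exact_mod_cast hh
      linarith
    nlinarith [mul_le_mul_of_nonneg_right hlB' hb,
      mul_nonneg (by
        have : (k:ℝ) ≤ hA := by exact_mod_cast (by omega : k ≤ hA)
        linarith : (0:ℝ) ≤ (hA:ℝ) - k) (by linarith : (0:ℝ) ≤ a - b),
      mul_nonneg (Nat.cast_nonneg li) hb]

theorem stmt18 {α : Type*} [DecidableEq α] (a b : ℝ) (hb : 0 ≤ b) (hab : b < a)
    (w : α → ℝ) (hw : ∀ g, w g = a ∨ w g = b)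
    (r : ℕ) (hr : 1 ≤ r)
    (Xi Xj : Finset α) (hdisj : Disjoint Xi Xj)
    -- X_i consists of exactly r - 1 high-value items and |X_i| - r + 1 low-value items
    (H : Finset α) (hH : H ⊆ Xi) (hHcard : H.card = r - 1)
    (hHhigh : ∀ g ∈ H, w g = a) (hlow : ∀ g ∈ Xi \ H, w g = b)
    -- the total low value of X_i is at most a
    (hlowtot : ((Xi \ H).card : ℝ) * b ≤ a)
    -- v(X_i) ≥ (r - 1) · a
    (hvXi : addVal w Xi ≥ ((r : ℝ) - 1) * a)
    -- X_j consists of exactly r items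
    (hXj : Xj.card = r) :
    mu (addVal w) (Xi ∪ Xj) ≤ ((r : ℝ) - 1) * a + ((Xi.card : ℝ) - (r : ℝ) + 1) * b ∧
    ((r : ℝ) - 1) * a + ((Xi.card : ℝ) - (r : ℝ) + 1) * b = addVal w Xi := by
  classical
  set li := (Xi \ H).card with hli
  have hHXi : H.card ≤ Xi.card := card_le_card hH
  have hXicard : Xi.card + 1 = li + r := by
    have := card_sdiff_of_subset hH
    omega
  have hsumH : ∑ g ∈ H, w g = (H.card : ℝ) * a := by
    rw [Finset.sum_congr rfl (fun g hg => hHhigh g hg), Finset.sum_const, nsmul_eq_mul]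
  have hsumL : ∑ g ∈ Xi \ H, w g = (li : ℝ) * b := by
    rw [Finset.sum_congr rfl (fun g hg => hlow g hg), Finset.sum_const, nsmul_eq_mul]
  have hcast : ((r - 1 : ℕ) : ℝ) = (r : ℝ) - 1 := by
    have := Nat.cast_sub (R := ℝ) hr; simpa using this
  have hvXieq : addVal w Xi = ((r : ℝ) - 1) * a + (li : ℝ) * b := by
    unfold addVal
    rw [← Finset.sum_sdiff hH, hsumH, hsumL, hHcard, hcast]
    ring
  have hlicast : ((Xi.card : ℝ)) - r + 1 = (li : ℝ) := by
    have : ((Xi.card : ℝ)) + 1 = (li : ℝ) + r := by exact_mod_cast hXicard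
    linarith
  have hTeq : ((r : ℝ) - 1) * a + ((Xi.card : ℝ) - (r : ℝ) + 1) * b = addVal w Xi := by
    rw [hvXieq, hlicast]
  refine ⟨?_, hTeq⟩
  rw [hTeq, hvXieq]
  apply Finset.sup'_le
  intro A hAmem
  rw [Finset.mem_powerset] at hAmem
  set S := Xi ∪ Xj with hS
  -- value formula
  have hval : ∀ F : Finset α, addVal w F =
      ((F.filter fun g => w g = a).card : ℝ) * a +
      ((F.filter fun g => ¬ w g = a).card : ℝ) * b := by
    intro F
    unfold addVal
    rw [← Finset.sum_filter_add_sum_filter_not F (fun g => w g = a)]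
    congr 1
    · rw [Finset.sum_congr rfl (fun g hg => (Finset.mem_filter.mp hg).2),
        Finset.sum_const, nsmul_eq_mul]
    · rw [Finset.sum_congr rfl (fun g hg => ?_), Finset.sum_const, nsmul_eq_mul]
      have hne := (Finset.mem_filter.mp hg).2
      rcases hw g with h | h
      · exact absurd h hne
      · exact h
  -- Xi's high items are exactly H
  have hXifilt : Xi.filter (fun g => w g = a) = H := by
    ext g
    simp only [Finset.mem_filter]
    constructor
    · rintro ⟨hgXi, hga⟩
      by_contra hgH
      have : w g = b := hlow g (Finset.mem_sdiff.mpr ⟨hgXi, hgH⟩)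
      rw [hga] at this
      exact absurd this (ne_of_gt hab)
    · intro hg
      exact ⟨hH hg, hHhigh g hg⟩
  have hXifiltn : Xi.filter (fun g => ¬ w g = a) = Xi \ H := by
    rw [Finset.filter_not, hXifilt]
  -- counts
  set kh := (Xj.filter (fun g => w g = a)).card with hkh
  set kl := (Xj.filter (fun g => ¬ w g = a)).card with hkl
  have hkkl : kh + kl = r := by
    rw [hkh, hkl, Finset.card_filter_add_card_filter_not, hXj]
  have hkhr : kh ≤ r := by omega
  -- counts over S split as Xi + Xj, and as A + S \ A
  have hsplit : ∀ p : α → Prop, ∀ _ : DecidablePred p,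
      (S.filter p).card = (Xi.filter p).card + (Xj.filter p).card := by
    intro p _
    rw [hS, Finset.filter_union,
      Finset.card_union_of_disjoint (Finset.disjoint_filter_filter hdisj)]
  have hsplitA : ∀ p : α → Prop, ∀ _ : DecidablePred p,
      (A.filter p).card + ((S \ A).filter p).card = (S.filter p).card := by
    intro p _
    rw [← Finset.card_union_of_disjoint
        (Finset.disjoint_filter_filter (Finset.disjoint_sdiff)),
      ← Finset.filter_union, Finset.union_sdiff_of_subset hAmem]
  have hhighS : (S.filter (fun g => w g = a)).card = (r - 1) + kh := by
    rw [hsplit _ inferInstance, hXifilt, hHcard]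
  have hlowS : (S.filter (fun g => ¬ w g = a)).card = li + kl := by
    rw [hsplit _ inferInstance, hXifiltn]
  have hh : (A.filter (fun g => w g = a)).card +
      ((S \ A).filter (fun g => w g = a)).card + 1 = r + kh := by
    rw [hsplitA _ inferInstance, hhighS]; omega
  have hl : (A.filter (fun g => ¬ w g = a)).card +
      ((S \ A).filter (fun g => ¬ w g = a)).card + kh = li + r := by
    rw [hsplitA _ inferInstance, hlowS]; omega
  rw [hval A, hval (S \ A)]
  exact arith18 a b hb hab r kh _ _ _ _ li hh hl hkhr
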